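/- For r ∈ [0,1] define the 3×3 complex matrix h_r(z,w) = [[zw + w, z − (1+r)/2, 0], [z − (1+r)/2, z w⁻¹ + ((1+r)/2) w⁻¹ + r, 1], [0, 1, z⁻¹]]. Then for every r ∈ [0,1] and all z, w ∈ ℂ with |z| = 1 and |w| = 1, det h_r(z,w) ≠ 0; that is, each h_r is a nonsingular matrix-valued function on the two-torus 𝕋². -/

import Mathlib

open Complex Matrix

/-- The bulk-gap-preserving deformation `h_r` of the off-diagonal block of the two-dimensional
model Hamiltonian of Section 5.1. -/
noncomputable def hDeform (r : ℝ) (z w : ℂ) : Matrix (Fin 3) (Fin 3) ℂ :=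
  !![z * w + w, z - (1 + (r : ℂ)) / 2, 0;
     z - (1 + (r : ℂ)) / 2, z * w⁻¹ + ((1 + (r : ℂ)) / 2) * w⁻¹ + (r : ℂ), 1;
     0, 1, z⁻¹]

/-! Multiplying by `z`, `det h_r(z, w) = 0` becomes
`((5 + 3r)/2) z + (1 - r²)/4 = w (z + 1) (z - r)`. On the torus the left side has modulus at least
`(5 + 3r)/2 - (1 - r²)/4 = (3 + r)²/4`, while the right side has modulus `|z + 1| |z - r|`, whose
square `2 (1 + Re z) (1 + r² - 2 r Re z)` stays below `((3 + r)²/4)²`. -/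

theorem mul_det_hDeform (r : ℝ) {z w : ℂ} (hz : z ≠ 0) (hw : w ≠ 0) :
    z * (hDeform r z w).det =
      (((5 + 3 * r) / 2 : ℝ) : ℂ) * z + (((1 - r ^ 2) / 4 : ℝ) : ℂ) - w * ((z + 1) * (z - r)) := by
  simp only [hDeform, det_fin_three, of_apply, cons_val', cons_val_zero, cons_val_one,
    cons_val_two, empty_val', cons_val_fin_one, head_cons, tail_cons, head_fin_const]
  push_cast
  field_simp
  ring

theorem Complex.sub_le_norm_ofReal_mul_add {z : ℂ} (hz : ‖z‖ = 1) (u v : ℝ) (hv : 0 ≤ v) :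
    u - v ≤ ‖(u : ℂ) * z + v‖ :=
  calc u - v ≤ ‖(u : ℂ) * z‖ - ‖(v : ℂ)‖ := by
        rw [norm_mul, hz, mul_one, norm_real, norm_real, Real.norm_of_nonneg hv]
        linarith [Real.le_norm_self u]
    _ ≤ ‖(u : ℂ) * z + v‖ := norm_sub_le_norm_add _ _

theorem Complex.norm_add_one_mul_sub_ofReal_lt {z : ℂ} (hz : ‖z‖ = 1) {r : ℝ} (hr : 0 ≤ r) :
    ‖(z + 1) * (z - r)‖ < (3 + r) ^ 2 / 4 := by
  have him : z.im ^ 2 = 1 - z.re ^ 2 := by rw [← sq_norm_sub_sq_re, hz, one_pow]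
  obtain ⟨hre₁, hre₂⟩ := abs_le.mp (hz ▸ abs_re_le_norm z)
  have hsq : ‖(z + 1) * (z - r)‖ ^ 2 = 2 * (1 + z.re) * (1 + r ^ 2 - 2 * r * z.re) := by
    rw [Complex.sq_norm, normSq_mul, normSq_apply, normSq_apply]
    simp only [add_re, add_im, sub_re, sub_im, one_re, one_im, ofReal_re, ofReal_im]
    linear_combination ((z.re + 1) ^ 2 + (z.re - r) ^ 2 + z.im ^ 2 + 1 - z.re ^ 2) * him
  refine lt_of_pow_lt_pow_left₀ 2 (by positivity) ?_
  rw [hsq]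
  nlinarith [mul_nonneg hr (sub_nonneg.2 hre₂), mul_nonneg hr (neg_le_iff_add_nonneg.1 hre₁),
    sq_nonneg (z.re - 1)]

/-- Each `h_r`, `r ∈ [0,1]`, is a nonsingular matrix-valued function on the two-torus. -/
theorem hDeform_det_ne_zero_on_torus :
    ∀ r : ℝ, 0 ≤ r → r ≤ 1 → ∀ z w : ℂ, ‖z‖ = 1 → ‖w‖ = 1 →
      (hDeform r z w).det ≠ 0 := by
  intro r hr0 hr1 z w hz hw hdet
  have hz0 : z ≠ 0 := norm_ne_zero_iff.mp (by simp [hz])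
  have hw0 : w ≠ 0 := norm_ne_zero_iff.mp (by simp [hw])
  have hbalance : (((5 + 3 * r) / 2 : ℝ) : ℂ) * z + (((1 - r ^ 2) / 4 : ℝ) : ℂ) =
      w * ((z + 1) * (z - r)) := by
    have h := mul_det_hDeform r hz0 hw0
    rw [hdet, mul_zero] at h
    linear_combination -h
  have hlower := sub_le_norm_ofReal_mul_add hz ((5 + 3 * r) / 2) ((1 - r ^ 2) / 4)
    (by nlinarith)
  have hupper := norm_add_one_mul_sub_ofReal_lt hz hr0
  rw [hbalance, norm_mul, hw, one_mul] at hlower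
  linarith
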